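/- Define the asymmetric multinomial coefficients A(k_1,...,k_n) for weak compositions of n by A() = 1 for n = 0 and, for n ≥ 1, A(k) = Σ_{j > i} A(k̃_j), where i is the largest index with k_i = 0 (and, when k has no zero entry, i is taken as a symbol c with c < 1 < ··· < n, so that the sum runs over all j ∈ {1,...,n}), and k̃_j is obtained by decreasing k_j by 1 and deleting the rightmost zero of the result. Then Σ over all weak compositions (k_1,...,k_n) of n of A(k_1,...,k_n) equals (2n-1)!!. -/

import Mathlib

open SimpleGraph

/-- A candidate leaf-labeled graph on vertex set `Fin V` with `L` labeled leaves. -/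
structure PreTree (L V : ℕ) where
  adj : Fin V → Fin V → Bool
  symm' : ∀ u v, adj u v = adj v u
  loopless' : ∀ v, adj v v = false
  leaf : Fin L → Fin V

def PreTree.G {L V : ℕ} (T : PreTree L V) : SimpleGraph (Fin V) where
  Adj u v := T.adj u v = true
  symm := ⟨fun u v h => by show T.adj v u = true; rw [T.symm']; exact h⟩
  loopless := ⟨fun v h => by
    have h' : T.adj v v = true := h; rw [T.loopless' v] at h'; exact Bool.noConfusion h'⟩

instance {L V : ℕ} (T : PreTree L V) : DecidableRel T.G.Adj :=
  fun u v => inferInstanceAs (Decidable (T.adj u v = true))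

/-- `T` is a trivalent tree with leaves labeled bijectively by `Fin L`. -/
def PreTree.IsTrivalent {L V : ℕ} (T : PreTree L V) : Prop :=
  T.G.IsTree ∧ (∀ v, T.G.degree v = 1 ∨ T.G.degree v = 3) ∧
    Function.Injective T.leaf ∧ (∀ i, T.G.degree (T.leaf i) = 1) ∧
    (∀ v, T.G.degree v = 1 → ∃ i, T.leaf i = v)

/-- Label-preserving isomorphism of leaf-labeled graphs. -/
def PreTree.Iso {L V : ℕ} (T T' : PreTree L V) : Prop :=
  ∃ σ : Fin V ≃ Fin V, (∀ u v, T'.adj (σ u) (σ v) = T.adj u v) ∧ ∀ i, σ (T.leaf i) = T'.leaf i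

/-- Leaves `a = 0` and `b = 1` share a common (internal) vertex. -/
def PreTree.ABAdj {n V : ℕ} (T : PreTree (n+3) V) : Prop :=
  ∃ v, T.G.Adj (T.leaf 0) v ∧ T.G.Adj (T.leaf 1) v

/-- Number of isomorphism classes of leaf-labeled graphs satisfying `P`. -/
noncomputable def classCount {L V : ℕ} (P : PreTree L V → Prop) : ℕ :=
  Nat.card (Quot fun (T T' : {T : PreTree L V // P T}) => PreTree.Iso T.1 T'.1)

/-- `w` separates `x` from `y` in `G`: every walk from `x` to `y` passes through `w`. -/
def Separates {V : Type*} (G : SimpleGraph V) (w x y : V) : Prop :=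
  ∀ p : G.Walk x y, w ∈ p.support

/-- The laziness rule applies: the unlabeled edge `E` is adjacent to a labeled
edge carrying a label `u ≠ j` with `u > i`. -/
def LazyApplies {n : ℕ} (T : PreTree (n+3) (2*n+4))
    (lab : Sym2 (Fin (2*n+4)) → Option (Fin (n+3)))
    (E : Sym2 (Fin (2*n+4))) (i j : Fin (n+3)) : Prop :=
  ∃ (e : Sym2 (Fin (2*n+4))) (u : Fin (n+3)) (v : Fin (2*n+4)),
    e ∈ T.G.edgeSet ∧ v ∈ e ∧ v ∈ E ∧ e ≠ E ∧ lab e = some u ∧ u ≠ j ∧ i < u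

/-- A run of the lazy tournament on a tree with `n+3` leaves (labels ordered
`a = 0 < b = 1 < c = 2 < 1 = 3 < ⋯ < n = n+2` as elements of `Fin (n+3)`).
`lab t` is the edge labeling before round `t`; round `t` has `loser t < winner t`
on adjacent labeled edges `loserE t`, `winnerE t` sharing vertex `vtx t` with the
unlabeled edge `newE t`, the pair having the maximal smaller label, and `newE t`
gets labeled according to the laziness rule. -/
structure Run (n : ℕ) (T : PreTree (n+3) (2*n+4)) where
  lab : ℕ → Sym2 (Fin (2*n+4)) → Option (Fin (n+3))
  loser : Fin n → Fin (n+3)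
  winner : Fin n → Fin (n+3)
  loserE : Fin n → Sym2 (Fin (2*n+4))
  winnerE : Fin n → Sym2 (Fin (2*n+4))
  newE : Fin n → Sym2 (Fin (2*n+4))
  vtx : Fin n → Fin (2*n+4)
  init_leaf : ∀ (i : Fin (n+3)) (w : Fin (2*n+4)), T.G.Adj (T.leaf i) w →
    lab 0 s(T.leaf i, w) = some i
  init_other : ∀ e : Sym2 (Fin (2*n+4)), (∀ i : Fin (n+3), T.leaf i ∉ e) → lab 0 e = none
  init_nonedge : ∀ e, e ∉ T.G.edgeSet → lab 0 e = none
  lt_lw : ∀ t, loser t < winner t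
  loserE_mem : ∀ t, loserE t ∈ T.G.edgeSet
  winnerE_mem : ∀ t, winnerE t ∈ T.G.edgeSet
  newE_mem : ∀ t, newE t ∈ T.G.edgeSet
  lab_loserE : ∀ t, lab t.1 (loserE t) = some (loser t)
  lab_winnerE : ∀ t, lab t.1 (winnerE t) = some (winner t)
  vtx_mem : ∀ t, vtx t ∈ loserE t ∧ vtx t ∈ winnerE t ∧ vtx t ∈ newE t
  edges_distinct : ∀ t, loserE t ≠ winnerE t ∧ loserE t ≠ newE t ∧ winnerE t ≠ newE t
  newE_unlabeled : ∀ t, lab t.1 (newE t) = none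
  max_rule : ∀ (t : Fin n) (e1 e2 e3 : Sym2 (Fin (2*n+4))) (i j : Fin (n+3)) (v : Fin (2*n+4)),
    e1 ∈ T.G.edgeSet → e2 ∈ T.G.edgeSet → e3 ∈ T.G.edgeSet →
    lab t.1 e1 = some i → lab t.1 e2 = some j → lab t.1 e3 = none → i < j →
    v ∈ e1 → v ∈ e2 → v ∈ e3 → e1 ≠ e2 → e1 ≠ e3 → e2 ≠ e3 →
    i ≤ loser t
  step_lazy : ∀ t : Fin n, LazyApplies T (lab t.1) (newE t) (loser t) (winner t) →
    lab (t.1+1) (newE t) = some (loser t)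
  step_nonlazy : ∀ t : Fin n, ¬ LazyApplies T (lab t.1) (newE t) (loser t) (winner t) →
    lab (t.1+1) (newE t) = some (winner t)
  step_frame : ∀ (t : Fin n) (e : Sym2 (Fin (2*n+4))), e ≠ newE t → lab (t.1+1) e = lab t.1 e

/-- Number of rounds won by label `i`. -/
def Run.wins {n : ℕ} {T : PreTree (n+3) (2*n+4)} (R : Run n T) (i : Fin (n+3)) : ℕ :=
  (Finset.univ.filter fun t : Fin n => R.winner t = i).card

/-- The element of `Fin (n+3)` corresponding to the numeric label `m+1 ∈ {1,…,n}`. -/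
def lbl {n : ℕ} (m : Fin n) : Fin (n+3) := ⟨(m:ℕ)+3, by omega⟩

/-- `T ∈ Tour(k₁,…,kₙ)`. -/
def InTour {n : ℕ} (k : Fin n → ℕ) (T : PreTree (n+3) (2*n+4)) : Prop :=
  T.IsTrivalent ∧ T.ABAdj ∧ ∃ R : Run n T, ∀ m : Fin n, R.wins (lbl m) = k m

/-- `|Tour(k₁,…,kₙ)|` (isomorphism classes). -/
noncomputable def TourCount {n : ℕ} (k : Fin n → ℕ) : ℕ := classCount (InTour k)

/-- `T'` is obtained from `T` by deleting the largest leaf and suppressing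
the resulting degree-2 vertex `w`. -/
def DelLast (n : ℕ) (T : PreTree ((n+1)+3) (2*(n+1)+4)) (T' : PreTree (n+3) (2*n+4)) : Prop :=
  ∃ (g : Fin (2*n+4) → Fin (2*(n+1)+4)) (w : Fin (2*(n+1)+4)),
    Function.Injective g ∧
    T.G.Adj (T.leaf (Fin.last (n+3))) w ∧
    (∀ v, v ∈ Set.range g ↔ (v ≠ T.leaf (Fin.last (n+3)) ∧ v ≠ w)) ∧
    (∀ u u' : Fin (2*n+4), T'.G.Adj u u' ↔
      (T.G.Adj (g u) (g u') ∨ (T.G.Adj (g u) w ∧ T.G.Adj (g u') w ∧ g u ≠ g u'))) ∧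
    (∀ i : Fin (n+3), g (T'.leaf i) = T.leaf (Fin.castSucc i))

/-- `T'` is obtained from `T` by successively deleting the leaves `r+1, …, n`. -/
inductive Restricts : (n : ℕ) → (r : ℕ) → PreTree (n+3) (2*n+4) → PreTree (r+3) (2*r+4) → Prop
  | refl (n : ℕ) (T : PreTree (n+3) (2*n+4)) : Restricts n n T T
  | step (n r : ℕ) (T : PreTree ((n+1)+3) (2*(n+1)+4)) (T1 : PreTree (n+3) (2*n+4))
      (T2 : PreTree (r+3) (2*r+4)) :
      DelLast n T T1 → Restricts n r T1 T2 → Restricts (n+1) r T T2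

/-- The composition `k̃_j`: decrement `k j` and delete position `dpos`
(the rightmost zero of the result). -/
def tilde {n : ℕ} (k : Fin (n+1) → ℕ) (dpos : ℕ) (j : Fin (n+1)) : Fin n → ℕ :=
  fun m => if (m:ℕ) < dpos then Function.update k j (k j - 1) (Fin.castSucc m)
           else Function.update k j (k j - 1) (Fin.succ m)

/-- The map `π_lazy` relates `T` to the pair `(j, T')` where `j` is the winner of the
first round of the tournament, the two leaves that competed are deleted (the shared
vertex becoming a new leaf) and the labels are shifted according to the (non)lazy case. -/
def PiLazyRel (n : ℕ) (k : Fin (n+1) → ℕ) (T : PreTree ((n+1)+3) (2*(n+1)+4))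
    (j : Fin (n+1)) (T' : PreTree (n+3) (2*n+4)) : Prop :=
  ∃ (R : Run (n+1) T) (g : Fin (2*n+4) → Fin (2*(n+1)+4)),
    (∀ m : Fin (n+1), R.wins (lbl m) = k m) ∧
    R.winner ⟨0, Nat.succ_pos n⟩ = lbl j ∧
    Function.Injective g ∧
    (∀ v, v ∈ Set.range g ↔
      (v ≠ T.leaf (R.loser ⟨0, Nat.succ_pos n⟩) ∧ v ≠ T.leaf (R.winner ⟨0, Nat.succ_pos n⟩))) ∧
    (∀ u u' : Fin (2*n+4), T'.G.Adj u u' ↔ T.G.Adj (g u) (g u')) ∧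
    (if k j = 1 then
      ∀ β : Fin (n+3), g (T'.leaf β) =
        (if (β:ℕ) = ((R.loser ⟨0, Nat.succ_pos n⟩) : ℕ) then R.vtx ⟨0, Nat.succ_pos n⟩
         else if (β:ℕ) < ((R.winner ⟨0, Nat.succ_pos n⟩) : ℕ) then T.leaf (Fin.castSucc β)
         else T.leaf (Fin.succ β))
     else
      ∀ β : Fin (n+3), g (T'.leaf β) =
        (if (β:ℕ) < ((R.loser ⟨0, Nat.succ_pos n⟩) : ℕ) then T.leaf (Fin.castSucc β)
         else if (β:ℕ)+1 = ((R.winner ⟨0, Nat.succ_pos n⟩) : ℕ) then R.vtx ⟨0, Nat.succ_pos n⟩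
         else T.leaf (Fin.succ β)))

/-! ### Parking functions.
A parking function of size `n` is encoded by `col : Fin n → Fin n`, where `col x` is the
(0-indexed) column of the label `x+1`; the Dyck path condition (for paths from `(0,n)` to
`(n,0)` staying weakly above the diagonal, cells left of down steps) is `IsPF`. -/

def IsPF {n : ℕ} (col : Fin n → Fin n) : Prop :=
  ∀ j : Fin n, n - (j:ℕ) ≤ (Finset.univ.filter fun x => j ≤ col x).card

/-- Dominance index of label `x+1`: the number of columns strictly to its right
containing no entry greater than `x+1` (empty columns count). -/
def domIdx {n : ℕ} (col : Fin n → Fin n) (x : Fin n) : ℕ :=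
  (Finset.univ.filter fun j : Fin n => col x < j ∧ ∀ y, col y = j → y ≤ x).card

/-- Column-restricted: `x > d_x` for all labels `x` (label `x : Fin n` has value `x+1`). -/
def ColRes {n : ℕ} (col : Fin n → Fin n) : Prop := ∀ x : Fin n, domIdx col x < (x:ℕ) + 1

/-- Number of labels in column `j`. -/
def colCount {n : ℕ} (col : Fin n → Fin n) (j : Fin n) : ℕ :=
  (Finset.univ.filter fun x => col x = j).card

/-- `col'` is the image of `col` under the map `r`: remove the row containing the
label `1`, decrement the remaining labels, and delete the rightmost empty column `E`. -/
def RSpec {n : ℕ} (col : Fin (n+1) → Fin (n+1)) (col' : Fin n → Fin n) : Prop :=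
  ∃ E : Fin (n+1),
    (∀ y : Fin (n+1), y ≠ 0 → col y ≠ E) ∧
    (∀ j : Fin (n+1), (∀ y, y ≠ 0 → col y ≠ j) → j ≤ E) ∧
    (∀ x : Fin n, (col' x : ℕ) =
      if (col (Fin.succ x) : ℕ) < (E:ℕ) then (col (Fin.succ x) : ℕ)
      else (col (Fin.succ x) : ℕ) - 1)

/-- `col` is the parking function `τ(T)`: column `col m` contains label `m+1`
iff the label `col m + 1` wins round `m+1` of the lazy tournament of `T`. -/
def TauRel {n : ℕ} (T : PreTree (n+3) (2*n+4)) (col : Fin n → Fin n) : Prop :=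
  ∃ R : Run n T, ∀ t : Fin n, ((R.winner t) : ℕ) = (col t : ℕ) + 3

namespace AMTaux

open Finset


/-- rightmost zero position + 1 (0 if none) -/
def iz {N : ℕ} (k : Fin N → ℕ) : ℕ :=
  (Finset.univ.filter fun p => k p = 0).sup fun p => (p : ℕ) + 1

lemma le_iz {N : ℕ} {k : Fin N → ℕ} {p : Fin N} (h : k p = 0) : (p : ℕ) + 1 ≤ iz k :=
  Finset.le_sup (f := fun q : Fin N => (q : ℕ) + 1)
    (Finset.mem_filter.mpr ⟨Finset.mem_univ _, h⟩)

lemma iz_le {N : ℕ} (k : Fin N → ℕ) : iz k ≤ N :=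
  Finset.sup_le fun p _ => p.isLt

lemma iz_spec {N : ℕ} (k : Fin N → ℕ) : iz k = 0 ∨ ∃ p : Fin N, (p : ℕ) + 1 = iz k ∧ k p = 0 := by
  rcases (Finset.univ.filter fun p : Fin N => k p = 0).eq_empty_or_nonempty with h | h
  · left; simp [iz, h]
  · right
    obtain ⟨p, hp, he⟩ := Finset.exists_mem_eq_sup _ h fun q : Fin N => (q : ℕ) + 1
    exact ⟨p, he.symm, (Finset.mem_filter.mp hp).2⟩

lemma iz_le_iff {N : ℕ} {k : Fin N → ℕ} {X : ℕ} :
    iz k ≤ X ↔ ∀ p : Fin N, X ≤ (p : ℕ) → 0 < k p := by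
  constructor
  · intro h p hp
    rcases Nat.eq_zero_or_pos (k p) with h0 | h0
    · have := le_iz h0; omega
    · exact h0
  · intro h
    refine Finset.sup_le fun p hp => ?_
    have h2 := (Finset.mem_filter.mp hp).2
    by_contra hc
    have := h p (by omega)
    omega

lemma coe_succAbove {n : ℕ} (d : Fin (n+1)) (t : Fin n) :
    ((d.succAbove t : Fin (n+1)) : ℕ) = if (t:ℕ) < (d:ℕ) then (t:ℕ) else (t:ℕ)+1 := by
  by_cases h : (t:ℕ) < (d:ℕ)
  · rw [Fin.succAbove_of_castSucc_lt d t (by simpa [Fin.lt_def] using h)]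
    simp [h]
  · rw [Fin.succAbove_of_le_castSucc d t (by simpa [Fin.le_def] using (by omega : (d:ℕ) ≤ (t:ℕ)))]
    simp [h]

lemma tilde_eq {n : ℕ} (k : Fin (n+1) → ℕ) (d : Fin (n+1)) (j : Fin (n+1)) (t : Fin n) :
    tilde k (d : ℕ) j t = Function.update k j (k j - 1) (d.succAbove t) := by
  unfold tilde
  by_cases h : (t:ℕ) < (d:ℕ)
  · rw [if_pos h, Fin.succAbove_of_castSucc_lt d t (by simpa [Fin.lt_def] using h)]
  · rw [if_neg h, Fin.succAbove_of_le_castSucc d t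
      (by simpa [Fin.le_def] using (by omega : (d:ℕ) ≤ (t:ℕ)))]


def Comps (N u : ℕ) : Finset (Fin N → ℕ) :=
  (Finset.Nat.antidiagonalTuple N N).filter fun k => ∀ p : Fin N, N ≤ (p : ℕ) + u → 0 < k p

lemma mem_Comps {N u : ℕ} {k : Fin N → ℕ} :
    k ∈ Comps N u ↔ (∑ i, k i) = N ∧ ∀ p : Fin N, N ≤ (p : ℕ) + u → 0 < k p := by
  simp [Comps, Finset.Nat.mem_antidiagonalTuple]

/-- Pairs `(d, j)` parametrizing preimages of `k'` under the tilde map. -/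
def PairSet (n u : ℕ) (k' : Fin n → ℕ) : Finset (Fin (n+1) × Fin (n+1)) :=
  Finset.univ.filter fun dj =>
    iz k' ≤ (dj.1 : ℕ) ∧
      ((dj.2 = dj.1 ∧ iz k' + u ≤ n + 1) ∨ ((dj.1 : ℕ) < (dj.2 : ℕ) ∧ (dj.1 : ℕ) + u ≤ n))

/-- The deleted position, as an element of `Fin (n+1)`. -/
def DF {n : ℕ} (k : Fin (n+1) → ℕ) (j : Fin (n+1)) : Fin (n+1) :=
  ⟨min (if k j = 1 then (j : ℕ) else iz k - 1) n, by omega⟩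

lemma DF_coe {n : ℕ} (k : Fin (n+1) → ℕ) (j : Fin (n+1)) :
    ((DF k j : Fin (n+1)) : ℕ) = if k j = 1 then (j : ℕ) else iz k - 1 := by
  have h1 := iz_le k
  have h2 := j.isLt
  simp only [DF]
  split <;> omega

/-- forward map on compositions -/
def TK {n : ℕ} (k : Fin (n+1) → ℕ) (j : Fin (n+1)) : Fin n → ℕ :=
  fun t => Function.update k j (k j - 1) ((DF k j).succAbove t)

lemma TK_eq_tilde {n : ℕ} (k : Fin (n+1) → ℕ) (j : Fin (n+1)) :
    TK k j = tilde k (if k j = 1 then (j : ℕ) else iz k - 1) j := by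
  funext t
  rw [← DF_coe k j, tilde_eq]
  rfl

/-- insertion of a zero at position `d` -/
def INS {n : ℕ} (k' : Fin n → ℕ) (d : Fin (n+1)) : Fin (n+1) → ℕ := d.insertNth 0 k'

/-- backward map on compositions -/
def BK {n : ℕ} (k' : Fin n → ℕ) (d j : Fin (n+1)) : Fin (n+1) → ℕ :=
  Function.update (INS k' d) j (INS k' d j + 1)

lemma INS_same {n : ℕ} (k' : Fin n → ℕ) (d : Fin (n+1)) : INS k' d d = 0 :=
  by simp [INS]

lemma INS_succAbove {n : ℕ} (k' : Fin n → ℕ) (d : Fin (n+1)) (t : Fin n) :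
    INS k' d (d.succAbove t) = k' t := by
  simp [INS]

lemma INS_sum {n : ℕ} (k' : Fin n → ℕ) (d : Fin (n+1)) :
    ∑ p, INS k' d p = ∑ t, k' t := by
  rw [Fin.sum_univ_succAbove (INS k' d) d, INS_same]
  simp [INS_succAbove]

lemma sum_update_add_one {N : ℕ} (f : Fin N → ℕ) (j : Fin N) :
    ∑ p, Function.update f j (f j + 1) p = (∑ p, f p) + 1 := by
  rw [Finset.sum_update_of_mem (Finset.mem_univ j)]
  have h := Finset.add_sum_erase Finset.univ f (Finset.mem_univ j)
  rw [← Finset.sdiff_singleton_eq_erase] at h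
  omega

lemma sum_update_sub_one {N : ℕ} (f : Fin N → ℕ) (j : Fin N) (h1 : 1 ≤ f j) :
    ∑ p, Function.update f j (f j - 1) p = (∑ p, f p) - 1 := by
  rw [Finset.sum_update_of_mem (Finset.mem_univ j)]
  have h := Finset.add_sum_erase Finset.univ f (Finset.mem_univ j)
  rw [← Finset.sdiff_singleton_eq_erase] at h
  omega


lemma fwd_facts {n : ℕ} (u : ℕ) (hu : u ≤ n+1) (k : Fin (n+1) → ℕ) (j : Fin (n+1))
    (hsum : ∑ i, k i = n+1)
    (htrail : ∀ p : Fin (n+1), n+1 ≤ (p:ℕ) + u → 0 < k p)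
    (hj : iz k ≤ (j:ℕ)) :
    (∑ t, TK k j t = n) ∧
    iz (TK k j) ≤ ((DF k j : Fin (n+1)) : ℕ) ∧
    ((j = DF k j ∧ iz (TK k j) + u ≤ n+1) ∨
      (((DF k j : Fin (n+1)) : ℕ) < (j:ℕ) ∧ ((DF k j : Fin (n+1)) : ℕ) + u ≤ n)) ∧
    BK (TK k j) (DF k j) j = k := by
  set D := DF k j with hD
  set m := Function.update k j (k j - 1) with hm
  have hTK : TK k j = fun t => m (D.succAbove t) := by rw [hm, hD]; rfl
  have f0 : 0 < k j := by
    rcases Nat.eq_zero_or_pos (k j) with h | h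
    · have := le_iz h; omega
    · exact h
  have hmj : m j = k j - 1 := by rw [hm]; simp
  have hmne : ∀ p, p ≠ j → m p = k p := by
    intro p hp; rw [hm]; exact Function.update_of_ne hp _ _
  have hmsum : ∑ p, m p = n := by rw [hm, sum_update_sub_one k j f0]; omega
  have key : m D = 0 ∧ (∀ p : Fin (n+1), (D:ℕ) < (p:ℕ) → 0 < m p) ∧
      ((k j = 1 ∧ (D:ℕ) = (j:ℕ)) ∨ (k j ≠ 1 ∧ (D:ℕ) + 1 ≤ (j:ℕ) ∧ k D = 0)) := by
    by_cases hc : k j = 1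
    · have hDj : (D:ℕ) = (j:ℕ) := by rw [hD, DF_coe, if_pos hc]
      have hDj' : D = j := Fin.ext hDj
      refine ⟨by rw [hDj', hmj, hc], ?_, Or.inl ⟨hc, hDj⟩⟩
      intro p hp
      have hpj : p ≠ j := by
        intro h; rw [h] at hp; omega
      rw [hmne p hpj]
      rcases Nat.eq_zero_or_pos (k p) with h | h
      · have := le_iz h; omega
      · exact h
    · have hk2 : 2 ≤ k j := by omega
      have hz1 : 1 ≤ iz k := by
        by_contra hzc
        have hall : ∀ p : Fin (n+1), 1 ≤ k p := by
          intro p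
          rcases Nat.eq_zero_or_pos (k p) with h | h
          · have := le_iz h; omega
          · omega
        have h1 : ∑ p ∈ Finset.univ.erase j, (1:ℕ) ≤ ∑ p ∈ Finset.univ.erase j, k p :=
          Finset.sum_le_sum fun p _ => hall p
        have h2 := Finset.add_sum_erase Finset.univ k (Finset.mem_univ j)
        have h3 : (Finset.univ.erase j).card = n := by
          rw [Finset.card_erase_of_mem (Finset.mem_univ j)]; simp
        rw [Finset.sum_const, h3, smul_eq_mul, mul_one] at h1
        omega
      have hDz : (D:ℕ) = iz k - 1 := by rw [hD, DF_coe, if_neg hc]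
      obtain ⟨p0, hp01, hp00⟩ := (iz_spec k).resolve_left (by omega)
      have hDp0 : D = p0 := Fin.ext (by omega)
      have hp0j : p0 ≠ j := by
        intro h; rw [h] at hp00; omega
      refine ⟨by rw [hDp0, hmne p0 hp0j, hp00], ?_, Or.inr ⟨hc, by omega, by rw [hDp0]; exact hp00⟩⟩
      intro p hp
      by_cases hpj : p = j
      · rw [hpj, hmj]; omega
      · rw [hmne p hpj]
        rcases Nat.eq_zero_or_pos (k p) with h | h
        · have := le_iz h; omega
        · exact h
  obtain ⟨f5, f2, f3⟩ := key
  have C1 : ∑ t, TK k j t = n := by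
    have hs := Fin.sum_univ_succAbove m D
    simp only [hTK]
    omega
  have C2' : ∀ t : Fin n, (D:ℕ) ≤ (t:ℕ) → 0 < TK k j t := by
    intro t ht
    simp only [hTK]
    apply f2
    rw [coe_succAbove, if_neg (by omega)]
    omega
  have C2 : iz (TK k j) ≤ (D:ℕ) := iz_le_iff.mpr C2'
  have C4 : BK (TK k j) D j = k := by
    have step1 : INS (TK k j) D = m := by
      have : INS (TK k j) D = D.insertNth (m D) (D.removeNth m) := by
        rw [INS, f5, hTK]; rfl
      rw [this, Fin.insertNth_self_removeNth]
    have step2 : Function.update m j (m j + 1) = k := by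
      funext p
      by_cases hpj : p = j
      · rw [hpj, Function.update_self, hmj]; omega
      · rw [Function.update_of_ne hpj, hmne p hpj]
    rw [BK, step1, step2]
  refine ⟨C1, C2, ?_, C4⟩
  rcases f3 with ⟨hc, hDj⟩ | ⟨hc, hDj, hkD⟩
  · left
    refine ⟨Fin.ext hDj.symm, ?_⟩
    have hizle : iz (TK k j) ≤ n + 1 - u := by
      apply iz_le_iff.mpr
      intro t ht
      simp only [hTK]
      have hq : n + 1 ≤ ((D.succAbove t : Fin (n+1)) : ℕ) + u := by
        rw [coe_succAbove]
        split <;> omega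
      have hk := htrail _ hq
      have hDj' : D = j := Fin.ext hDj
      have hne : D.succAbove t ≠ j := by
        rw [← hDj']; exact Fin.succAbove_ne D t
      rw [hmne _ hne]
      exact hk
    omega
  · right
    refine ⟨by omega, ?_⟩
    by_contra hDu
    have := htrail D (by omega)
    omega


lemma bwd_facts {n : ℕ} (u : ℕ) (k' : Fin n → ℕ) (d j : Fin (n+1))
    (hsum : ∑ t, k' t = n)
    (h1 : iz k' ≤ (d:ℕ))
    (hAB : (j = d ∧ iz k' + u ≤ n+1) ∨ ((d:ℕ) < (j:ℕ) ∧ (d:ℕ) + u ≤ n)) :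
    (∑ p, BK k' d j p = n+1) ∧
    (∀ p : Fin (n+1), n+1 ≤ (p:ℕ)+u → 0 < BK k' d j p) ∧
    iz (BK k' d j) ≤ (j:ℕ) ∧
    DF (BK k' d j) j = d ∧
    TK (BK k' d j) j = k' := by
  set K := BK k' d j with hK
  set I := INS k' d with hI
  have ht' : ∀ t : Fin n, (d:ℕ) ≤ (t:ℕ) → 0 < k' t := iz_le_iff.mp h1
  have hKapp : ∀ p, K p = if p = j then I j + 1 else I p := by
    intro p
    simp only [hK, BK, Function.update_apply, ← hI]
  have hIle : ∀ p, I p ≤ K p := by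
    intro p
    rw [hKapp]
    split
    · rename_i h; rw [h]; omega
    · exact le_rfl
  have hId : I d = 0 := INS_same k' d
  have hIs : ∀ t, I (d.succAbove t) = k' t := INS_succAbove k' d
  have hsuccpos : ∀ t : Fin n, (d:ℕ) ≤ (t:ℕ) → 0 < K (d.succAbove t) := by
    intro t ht
    have h2 := ht' t ht
    have h3 := hIs t
    have h4 := hIle (d.succAbove t)
    omega
  have main : ∀ p : Fin (n+1), (d:ℕ) < (p:ℕ) → 0 < K p := by
    intro p hp
    have hpd : p ≠ d := by
      intro h; rw [h] at hp; omega
    obtain ⟨t, htEq⟩ := Fin.exists_succAbove_eq hpd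
    subst htEq
    have hco := coe_succAbove d t
    apply hsuccpos t
    by_cases hlt : (t:ℕ) < (d:ℕ)
    · rw [if_pos hlt] at hco; omega
    · omega
  have B1 : ∑ p, K p = n+1 := by
    rw [hK, BK, sum_update_add_one, INS_sum, hsum]
  have B2 : ∀ p : Fin (n+1), n+1 ≤ (p:ℕ)+u → 0 < K p := by
    intro p hp
    by_cases hpd : p = d
    · subst hpd
      rcases hAB with ⟨hjd, hiz⟩ | ⟨hdj, hdu⟩
      · rw [hKapp, if_pos hjd.symm]; omega
      · omega
    · obtain ⟨t, htEq⟩ := Fin.exists_succAbove_eq hpd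
      subst htEq
      have hco := coe_succAbove d t
      have hps := hIs t
      have hle := hIle (d.succAbove t)
      by_cases hlt : (t:ℕ) < (d:ℕ)
      · rw [if_pos hlt] at hco
        rcases hAB with ⟨hjd, hiz⟩ | ⟨hdj, hdu⟩
        · have h0 : 0 < k' t := iz_le_iff.mp (show iz k' ≤ (t:ℕ) by omega) t le_rfl
          omega
        · omega
      · rw [if_neg hlt] at hco
        have h0 := ht' t (by omega)
        omega
  have B3 : iz K ≤ (j:ℕ) := by
    apply iz_le_iff.mpr
    intro p hp
    rcases hAB with ⟨hjd, hiz⟩ | ⟨hdj, hdu⟩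
    · by_cases hpd : p = d
      · rw [hpd, hKapp, if_pos hjd.symm]; omega
      · have hco : (p:ℕ) ≠ (d:ℕ) := fun h => hpd (Fin.ext h)
        have hjd' : (j:ℕ) = (d:ℕ) := by rw [hjd]
        exact main p (by omega)
    · exact main p (by omega)
  have B4 : DF K j = d := by
    rcases hAB with ⟨hjd, hiz⟩ | ⟨hdj, hdu⟩
    · have hIj : I j = 0 := by rw [hjd]; exact hId
      have hKj : K j = 1 := by rw [hKapp, if_pos rfl, hIj]
      apply Fin.ext
      rw [DF_coe, if_pos hKj, hjd]
    · have hpd : j ≠ d := by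
        intro h; rw [h] at hdj; omega
      obtain ⟨t, htEq⟩ := Fin.exists_succAbove_eq hpd
      have hco := coe_succAbove d t
      rw [htEq] at hco
      have htd : (d:ℕ) ≤ (t:ℕ) := by
        by_cases hlt : (t:ℕ) < (d:ℕ)
        · rw [if_pos hlt] at hco; omega
        · omega
      have h0 := ht' t htd
      have hIj : I j = k' t := by rw [← htEq]; exact hIs t
      have hKj : 2 ≤ K j := by rw [hKapp, if_pos rfl]; omega
      have hKd : K d = 0 := by rw [hKapp, if_neg (Ne.symm hpd)]; exact hId
      have hge : (d:ℕ)+1 ≤ iz K := le_iz hKd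
      have hle2 : iz K ≤ (d:ℕ)+1 := iz_le_iff.mpr fun p hp => main p (by omega)
      apply Fin.ext
      rw [DF_coe, if_neg (by omega)]
      omega
  have B5 : TK K j = k' := by
    have hupd : Function.update K j (K j - 1) = I := by
      funext p
      by_cases hpj : p = j
      · rw [hpj, Function.update_self, hKapp, if_pos rfl]
        omega
      · rw [Function.update_of_ne hpj, hKapp, if_neg hpj]
    funext t
    show Function.update K j (K j - 1) ((DF K j).succAbove t) = k' t
    rw [hupd, B4]
    exact hIs t
  exact ⟨B1, B2, B3, B4, B5⟩


lemma key_step (A : (n : ℕ) → (Fin n → ℕ) → ℕ)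
    (hrec : ∀ (n : ℕ) (k : Fin (n+1) → ℕ), (∑ p, k p = n+1) →
      ∀ ipn : ℕ, (∀ p : Fin (n+1), k p = 0 → (p:ℕ)+1 ≤ ipn) →
        (ipn = 0 ∨ ∃ p : Fin (n+1), (p:ℕ)+1 = ipn ∧ k p = 0) →
        A (n+1) k = ∑ j ∈ Finset.univ.filter (fun j : Fin (n+1) => ipn ≤ (j:ℕ)),
          A n (tilde k (if k j = 1 then (j:ℕ) else ipn - 1) j))
    (n u : ℕ) (hu : u ≤ n+1) :
    ∑ k ∈ Comps (n+1) u, A (n+1) k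
      = ∑ k' ∈ Comps n 0, (PairSet n u k').card * A n k' := by
  have hL : ∀ k ∈ Comps (n+1) u, A (n+1) k
      = ∑ j ∈ Finset.univ.filter (fun j : Fin (n+1) => iz k ≤ (j:ℕ)), A n (TK k j) := by
    intro k hk
    obtain ⟨hs, ht⟩ := mem_Comps.mp hk
    rw [hrec n k hs (iz k) (fun p hp => le_iz hp) (iz_spec k)]
    exact Finset.sum_congr rfl fun j _ => by rw [TK_eq_tilde]
  rw [Finset.sum_congr rfl hL]
  have hR : ∀ k' ∈ Comps n 0, (PairSet n u k').card * A n k' = ∑ _dj ∈ PairSet n u k', A n k' := by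
    intro k' _
    rw [Finset.sum_const, smul_eq_mul]
  rw [Finset.sum_congr rfl hR]
  rw [Finset.sum_sigma', Finset.sum_sigma']
  refine Finset.sum_bij'
    (fun x _ => (⟨TK x.1 x.2, (DF x.1 x.2, x.2)⟩ : Σ _ : Fin n → ℕ, Fin (n+1) × Fin (n+1)))
    (fun y _ => (⟨BK y.1 y.2.1 y.2.2, y.2.2⟩ : Σ _ : Fin (n+1) → ℕ, Fin (n+1)))
    ?_ ?_ ?_ ?_ ?_
  · -- maps into target
    rintro ⟨k, j⟩ hx
    obtain ⟨hk, hj⟩ := Finset.mem_sigma.mp hx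
    obtain ⟨hs, ht⟩ := mem_Comps.mp hk
    have hjz : iz k ≤ (j:ℕ) := (Finset.mem_filter.mp hj).2
    obtain ⟨C1, C2, C3, _⟩ := fwd_facts u hu k j hs ht hjz
    refine Finset.mem_sigma.mpr ⟨mem_Comps.mpr ⟨C1, fun p hp => ?_⟩, ?_⟩
    · have := p.isLt; omega
    · exact Finset.mem_filter.mpr ⟨Finset.mem_univ _, C2, C3⟩
  · -- reverse maps into source
    rintro ⟨k', d, j⟩ hy
    obtain ⟨hk', hdj⟩ := Finset.mem_sigma.mp hy
    obtain ⟨hs, _⟩ := mem_Comps.mp hk'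
    obtain ⟨_, h1, hAB⟩ := Finset.mem_filter.mp hdj
    obtain ⟨B1, B2, B3, _, _⟩ := bwd_facts u k' d j hs h1 hAB
    exact Finset.mem_sigma.mpr ⟨mem_Comps.mpr ⟨B1, B2⟩,
      Finset.mem_filter.mpr ⟨Finset.mem_univ _, B3⟩⟩
  · -- left inverse
    rintro ⟨k, j⟩ hx
    obtain ⟨hk, hj⟩ := Finset.mem_sigma.mp hx
    obtain ⟨hs, ht⟩ := mem_Comps.mp hk
    have hjz : iz k ≤ (j:ℕ) := (Finset.mem_filter.mp hj).2
    obtain ⟨_, _, _, C4⟩ := fwd_facts u hu k j hs ht hjz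
    exact congrArg (fun f => (⟨f, j⟩ : Σ _ : Fin (n+1) → ℕ, Fin (n+1))) C4
  · -- right inverse
    rintro ⟨k', d, j⟩ hy
    obtain ⟨hk', hdj⟩ := Finset.mem_sigma.mp hy
    obtain ⟨hs, _⟩ := mem_Comps.mp hk'
    obtain ⟨_, h1, hAB⟩ := Finset.mem_filter.mp hdj
    obtain ⟨_, _, _, B4, B5⟩ := bwd_facts u k' d j hs h1 hAB
    show (⟨TK (BK k' d j) j, (DF (BK k' d j) j, j)⟩
        : Σ _ : Fin n → ℕ, Fin (n+1) × Fin (n+1)) = ⟨k', (d, j)⟩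
    rw [B5, B4]
  · rintro ⟨k, j⟩ _
    rfl


lemma card_filter_le_fin (N a : ℕ) :
    (Finset.univ.filter fun d : Fin N => a ≤ (d:ℕ)).card = N - a := by
  rw [Finset.card_filter]
  rw [Fin.sum_univ_eq_sum_range (fun m => if a ≤ m then 1 else 0) N]
  rw [← Finset.card_filter]
  have : (Finset.range N).filter (fun m => a ≤ m) = Finset.Ico a N := by
    ext m
    simp only [Finset.mem_filter, Finset.mem_range, Finset.mem_Ico]
    omega
  rw [this, Nat.card_Ico]

lemma card_filter_lt_fin (N a : ℕ) :
    (Finset.univ.filter fun d : Fin N => a < (d:ℕ)).card = N - (a+1) := by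
  rw [Finset.card_filter]
  rw [Fin.sum_univ_eq_sum_range (fun m => if a < m then 1 else 0) N]
  rw [← Finset.card_filter]
  have : (Finset.range N).filter (fun m => a < m) = Finset.Ico (a+1) N := by
    ext m
    simp only [Finset.mem_filter, Finset.mem_range, Finset.mem_Ico]
    omega
  rw [this, Nat.card_Ico]

lemma card_PairSet {n : ℕ} (u : ℕ) (k' : Fin n → ℕ) :
    (PairSet n u k').card = ∑ v ∈ Finset.Icc (max u 1) (n + 1 - iz k'), v := by
  classical
  set z := iz k' with hz
  have hzn : z ≤ n := iz_le k'
  have hsplit : PairSet n u k'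
      = (Finset.univ.filter fun dj : Fin (n+1) × Fin (n+1) =>
          z ≤ (dj.1:ℕ) ∧ dj.2 = dj.1 ∧ z + u ≤ n+1)
        ∪ (Finset.univ.filter fun dj : Fin (n+1) × Fin (n+1) =>
          z ≤ (dj.1:ℕ) ∧ (dj.1:ℕ) < (dj.2:ℕ) ∧ (dj.1:ℕ) + u ≤ n) := by
    ext dj
    simp only [PairSet, Finset.mem_filter, Finset.mem_union, Finset.mem_univ, true_and]
    tauto
  rw [hsplit, Finset.card_union_of_disjoint]
  swap
  · rw [Finset.disjoint_left]
    rintro dj h1 h2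
    simp only [Finset.mem_filter, Finset.mem_univ, true_and] at h1 h2
    obtain ⟨-, he, -⟩ := h1
    obtain ⟨-, hlt, -⟩ := h2
    rw [he] at hlt
    omega
  have hA : (Finset.univ.filter fun dj : Fin (n+1) × Fin (n+1) =>
        z ≤ (dj.1:ℕ) ∧ dj.2 = dj.1 ∧ z + u ≤ n+1).card
      = if z + u ≤ n+1 then (n+1-z) else 0 := by
    by_cases hc : z + u ≤ n+1
    · rw [if_pos hc]
      have himg : (Finset.univ.filter fun dj : Fin (n+1) × Fin (n+1) =>
            z ≤ (dj.1:ℕ) ∧ dj.2 = dj.1 ∧ z + u ≤ n+1)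
          = (Finset.univ.filter fun d : Fin (n+1) => z ≤ (d:ℕ)).image (fun d => (d, d)) := by
        ext ⟨d0, j0⟩
        simp only [Finset.mem_filter, Finset.mem_univ, true_and, Finset.mem_image,
          Prod.mk.injEq]
        constructor
        · rintro ⟨h1, h2, -⟩
          exact ⟨d0, h1, rfl, h2.symm⟩
        · rintro ⟨d, hd, rfl, rfl⟩
          exact ⟨hd, rfl, hc⟩
      rw [himg, Finset.card_image_of_injective _ (fun a b h => congrArg Prod.fst h),
        card_filter_le_fin]
    · rw [if_neg hc]
      rw [Finset.card_eq_zero, Finset.filter_eq_empty_iff]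
      rintro dj -
      rintro ⟨-, -, h3⟩
      exact hc h3
  have hB : (Finset.univ.filter fun dj : Fin (n+1) × Fin (n+1) =>
        z ≤ (dj.1:ℕ) ∧ (dj.1:ℕ) < (dj.2:ℕ) ∧ (dj.1:ℕ) + u ≤ n).card
      = ∑ m ∈ Finset.Icc u (n - z), m := by
    rw [Finset.card_eq_sum_card_fiberwise
      (f := Prod.fst) (t := Finset.univ) (fun x _ => Finset.mem_univ _)]
    have hfib : ∀ d : Fin (n+1),
        ((Finset.univ.filter fun dj : Fin (n+1) × Fin (n+1) =>
          z ≤ (dj.1:ℕ) ∧ (dj.1:ℕ) < (dj.2:ℕ) ∧ (dj.1:ℕ) + u ≤ n).filter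
            fun x => x.1 = d).card
        = (fun m => if z ≤ m ∧ m + u ≤ n then n - m else 0) (d:ℕ) := by
      intro d
      simp only []
      by_cases hc : z ≤ (d:ℕ) ∧ (d:ℕ) + u ≤ n
      · rw [if_pos hc]
        have himg : ((Finset.univ.filter fun dj : Fin (n+1) × Fin (n+1) =>
              z ≤ (dj.1:ℕ) ∧ (dj.1:ℕ) < (dj.2:ℕ) ∧ (dj.1:ℕ) + u ≤ n).filter
                fun x => x.1 = d)
            = (Finset.univ.filter fun j : Fin (n+1) => (d:ℕ) < (j:ℕ)).image
                (fun j => (d, j)) := by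
          ext ⟨d0, j0⟩
          simp only [Finset.mem_filter, Finset.mem_univ, true_and, Finset.mem_image,
            Prod.mk.injEq]
          constructor
          · rintro ⟨⟨h1, h2, h3⟩, rfl⟩
            exact ⟨j0, h2, rfl, rfl⟩
          · rintro ⟨j, hj, rfl, rfl⟩
            exact ⟨⟨hc.1, hj, hc.2⟩, rfl⟩
        rw [himg, Finset.card_image_of_injective _
          (fun a b h => (Prod.mk.injEq _ _ _ _).mp h |>.2), card_filter_lt_fin]
        omega
      · rw [if_neg hc]
        rw [Finset.card_eq_zero, Finset.filter_eq_empty_iff]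
        rintro ⟨d0, j0⟩ hd0
        simp only [Finset.mem_filter, Finset.mem_univ, true_and] at hd0
        rintro rfl
        exact hc ⟨hd0.1, hd0.2.2⟩
    rw [Finset.sum_congr rfl (fun d _ => hfib d)]
    rw [Fin.sum_univ_eq_sum_range (fun m => if z ≤ m ∧ m + u ≤ n then n - m else 0) (n+1)]
    rw [← Finset.sum_range_reflect]
    have hrefl : ∀ m ∈ Finset.range (n+1),
        (fun m => if z ≤ m ∧ m + u ≤ n then n - m else 0) (n + 1 - 1 - m)
          = if u ≤ m ∧ m ≤ n - z then m else 0 := by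
      intro m hm
      have hm' := Finset.mem_range.mp hm
      simp only []
      by_cases h2 : u ≤ m ∧ m ≤ n - z
      · rw [if_pos h2, if_pos (by omega)]
        omega
      · rw [if_neg h2, if_neg (by omega)]
    rw [Finset.sum_congr rfl hrefl]
    rw [← Finset.sum_filter]
    congr 1
    ext a
    simp only [Finset.mem_filter, Finset.mem_range, Finset.mem_Icc]
    omega
  rw [hA, hB]
  by_cases hc : z + u ≤ n + 1
  · rw [if_pos hc]
    have hS : n + 1 - z = (n - z) + 1 := by omega
    rw [hS, Finset.sum_Icc_succ_top (by omega : max u 1 ≤ n - z + 1)]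
    have heq : ∑ v ∈ Finset.Icc (max u 1) (n - z), v = ∑ v ∈ Finset.Icc u (n - z), v := by
      rcases Nat.eq_zero_or_pos u with hu0 | hu0
      · subst hu0
        simp only [show max 0 1 = 1 from rfl]
        refine Finset.sum_subset (Finset.Icc_subset_Icc_left (by omega)) ?_
        intro x hx hnx
        simp only [Finset.mem_Icc] at hx hnx
        omega
      · rw [Nat.max_eq_left hu0]
    rw [heq]
    omega
  · rw [if_neg hc]
    have h1 : Finset.Icc u (n - z) = ∅ := Finset.Icc_eq_empty (by omega)
    have h2 : Finset.Icc (max u 1) (n + 1 - z) = ∅ := Finset.Icc_eq_empty (by omega)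
    rw [h1, h2]
    simp


lemma comps_filter {n : ℕ} (v : ℕ) (hv1 : 1 ≤ v) (hv2 : v ≤ n+1) :
    Comps n (v-1) = (Comps n 0).filter fun k' => v ≤ n + 1 - iz k' := by
  ext k'
  simp only [mem_Comps, Finset.mem_filter]
  constructor
  · rintro ⟨hs, htr⟩
    refine ⟨⟨hs, fun p hp => absurd hp (by have := p.isLt; omega)⟩, ?_⟩
    have h2 : iz k' ≤ n+1-v := iz_le_iff.mpr (fun p hp => htr p (by omega))
    have := iz_le k'
    omega
  · rintro ⟨⟨hs, -⟩, hv⟩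
    refine ⟨hs, fun p hp => ?_⟩
    have h2 : iz k' ≤ n+1-v := by have := iz_le k'; omega
    exact iz_le_iff.mp h2 p (by omega)

lemma step2 (A : (n : ℕ) → (Fin n → ℕ) → ℕ)
    (hrec : ∀ (n : ℕ) (k : Fin (n+1) → ℕ), (∑ p, k p = n+1) →
      ∀ ipn : ℕ, (∀ p : Fin (n+1), k p = 0 → (p:ℕ)+1 ≤ ipn) →
        (ipn = 0 ∨ ∃ p : Fin (n+1), (p:ℕ)+1 = ipn ∧ k p = 0) →
        A (n+1) k = ∑ j ∈ Finset.univ.filter (fun j : Fin (n+1) => ipn ≤ (j:ℕ)),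
          A n (tilde k (if k j = 1 then (j:ℕ) else ipn - 1) j))
    (n u : ℕ) (hu : u ≤ n+1) :
    ∑ k ∈ Comps (n+1) u, A (n+1) k
      = ∑ v ∈ Finset.Icc (max u 1) (n+1), v * ∑ k' ∈ Comps n (v-1), A n k' := by
  rw [key_step A hrec n u hu]
  have h1 : ∀ k' ∈ Comps n 0, (PairSet n u k').card * A n k'
      = ∑ v ∈ Finset.Icc (max u 1) (n+1), (if v ≤ n+1 - iz k' then v * A n k' else 0) := by
    intro k' _
    rw [card_PairSet, Finset.sum_mul, ← Finset.sum_filter]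
    congr 1
    ext a
    simp only [Finset.mem_Icc, Finset.mem_filter]
    have := iz_le k'
    omega
  rw [Finset.sum_congr rfl h1, Finset.sum_comm]
  refine Finset.sum_congr rfl fun v hv => ?_
  obtain ⟨hv1, hv2⟩ := Finset.mem_Icc.mp hv
  rw [← Finset.sum_filter, ← comps_filter v (by omega) hv2, Finset.mul_sum]

/-- The abstract recursion values. -/
def gseq : ℕ → ℕ → ℕ
  | 0, _ => 1
  | (n+1), u => ∑ v ∈ Finset.Icc (max u 1) (n+1), v * gseq n (v-1)

lemma sum_comps_eq_gseq (A : (n : ℕ) → (Fin n → ℕ) → ℕ)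
    (hbase : ∀ k : Fin 0 → ℕ, A 0 k = 1)
    (hrec : ∀ (n : ℕ) (k : Fin (n+1) → ℕ), (∑ p, k p = n+1) →
      ∀ ipn : ℕ, (∀ p : Fin (n+1), k p = 0 → (p:ℕ)+1 ≤ ipn) →
        (ipn = 0 ∨ ∃ p : Fin (n+1), (p:ℕ)+1 = ipn ∧ k p = 0) →
        A (n+1) k = ∑ j ∈ Finset.univ.filter (fun j : Fin (n+1) => ipn ≤ (j:ℕ)),
          A n (tilde k (if k j = 1 then (j:ℕ) else ipn - 1) j)) :
    ∀ n u, u ≤ n → ∑ k ∈ Comps n u, A n k = gseq n u := by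
  intro n
  induction n with
  | zero =>
    intro u hu
    have hC : Comps 0 u = {![]} := by
      rw [Comps, Finset.Nat.antidiagonalTuple_zero_zero, Finset.filter_singleton,
        if_pos (fun p _ => p.elim0)]
    rw [hC, Finset.sum_singleton, hbase]
    rfl
  | succ n ih =>
    intro u hu
    rw [step2 A hrec n u (by omega)]
    show _ = gseq (n+1) u
    rw [gseq]
    refine Finset.sum_congr rfl fun v hv => ?_
    obtain ⟨h1, h2⟩ := Finset.mem_Icc.mp hv
    rw [ih (v-1) (by omega)]

lemma gseq_succ_top (n : ℕ) : gseq (n+1) (n+1) = (n+1) * gseq n n := by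
  rw [gseq]
  rw [show max (n+1) 1 = n+1 by omega, Finset.Icc_self, Finset.sum_singleton]
  norm_num

lemma gseq_succ_step (n u : ℕ) (h1 : 1 ≤ u) (h2 : u ≤ n+1) :
    gseq (n+1) u = u * gseq n (u-1) + gseq (n+1) (u+1) := by
  rw [gseq, gseq]
  rw [show max u 1 = u by omega, show max (u+1) 1 = u+1 by omega]
  rw [show Finset.Icc u (n+1) = insert u (Finset.Icc (u+1) (n+1)) by
    ext a; simp only [Finset.mem_insert, Finset.mem_Icc]; omega]
  rw [Finset.sum_insert (by simp only [Finset.mem_Icc]; omega)]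

lemma gseq_zero_one (n : ℕ) : gseq (n+1) 0 = gseq (n+1) 1 := by
  rw [gseq, gseq]
  norm_num

lemma gseq_fact : ∀ n u, u ≤ n →
    gseq n u * ((n-u).factorial * 2^(n-u)) = (2*n - u).factorial := by
  intro n
  induction n with
  | zero =>
    intro u hu
    have : u = 0 := by omega
    subst this
    simp [gseq]
  | succ n ih =>
    have key : ∀ t u, u ≤ n+1 → n+1 - u ≤ t →
        gseq (n+1) u * (((n+1)-u).factorial * 2^((n+1)-u)) = (2*(n+1) - u).factorial := by
      intro t
      induction t with
      | zero =>
        intro u hu ht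
        have huu : u = n+1 := by omega
        subst huu
        rw [gseq_succ_top]
        have hn := ih n le_rfl
        rw [show n - n = 0 by omega, show 2*n - n = n by omega] at hn
        simp only [Nat.factorial_zero, pow_zero, mul_one] at hn
        rw [show (n+1) - (n+1) = 0 by omega, show 2*(n+1) - (n+1) = n+1 by omega]
        simp only [Nat.factorial_zero, pow_zero, mul_one]
        rw [Nat.factorial_succ, hn]
      | succ t iht =>
        intro u hu ht
        by_cases hle : n+1-u ≤ t
        · exact iht u hu hle
        · by_cases hu0 : u = 0
          · subst hu0
            rw [gseq_zero_one]
            have h1 := iht 1 (by omega) (by omega)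
            rw [show (n+1) - 1 = n by omega, show 2*(n+1) - 1 = 2*n+1 by omega] at h1
            rw [show (n+1) - 0 = n+1 by omega, show 2*(n+1) - 0 = (2*n+1)+1 by omega]
            rw [Nat.factorial_succ (2*n+1), ← h1]
            rw [Nat.factorial_succ n, pow_succ]
            ring
          · have hu1 : 1 ≤ u := by omega
            have hun : u ≤ n := by omega
            rw [gseq_succ_step n u hu1 (by omega)]
            have h1 := iht (u+1) (by omega) (by omega)
            have h2 := ih (u-1) (by omega)
            rw [show (n+1) - (u+1) = n - u by omega,
              show 2*(n+1) - (u+1) = 2*n+1-u by omega] at h1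
            rw [show n - (u-1) = (n-u)+1 by omega,
              show 2*n - (u-1) = 2*n+1-u by omega] at h2
            rw [show (n+1) - u = (n-u)+1 by omega,
              show 2*(n+1) - u = (2*n+1-u)+1 by omega]
            have e : (u * gseq n (u-1) + gseq (n+1) (u+1))
                  * ((n-u+1).factorial * 2^(n-u+1))
                = u * (gseq n (u-1) * ((n-u+1).factorial * 2^(n-u+1)))
                  + (2*((n-u)+1)) * (gseq (n+1) (u+1) * ((n-u).factorial * 2^(n-u))) := by
              rw [Nat.factorial_succ (n-u), pow_succ]
              ring
            rw [e, h2, h1, Nat.factorial_succ (2*n+1-u), ← Nat.add_mul]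
            congr 1
            omega
    exact fun u hu => key (n+1) u hu (by omega)


lemma gseq_doubleFactorial (n : ℕ) : gseq n 0 = Nat.doubleFactorial (2*n - 1) := by
  rcases Nat.eq_zero_or_pos n with h | h
  · subst h; rfl
  · have hf := gseq_fact n 0 (by omega)
    rw [show n - 0 = n by omega, show 2*n - 0 = 2*n by omega] at hf
    have h1 : (2*n).factorial = (2*n).doubleFactorial * (2*n-1).doubleFactorial := by
      have h2 : 2*n = (2*n-1)+1 := by omega
      rw [h2]
      rw [Nat.factorial_eq_mul_doubleFactorial]
      rw [← h2]
    rw [Nat.doubleFactorial_two_mul] at h1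
    have hpos : 0 < n.factorial * 2^n := by positivity
    apply Nat.eq_of_mul_eq_mul_right hpos
    rw [hf, h1]
    ring

theorem asymmetric_multinomial_total' (A : (n : ℕ) → (Fin n → ℕ) → ℕ)
    (hbase : ∀ k : Fin 0 → ℕ, A 0 k = 1)
    (hrec : ∀ (n : ℕ) (k : Fin (n+1) → ℕ), (∑ p, k p = n+1) →
      ∀ ipn : ℕ, (∀ p : Fin (n+1), k p = 0 → (p:ℕ)+1 ≤ ipn) →
        (ipn = 0 ∨ ∃ p : Fin (n+1), (p:ℕ)+1 = ipn ∧ k p = 0) →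
        A (n+1) k = ∑ j ∈ Finset.univ.filter (fun j : Fin (n+1) => ipn ≤ (j:ℕ)),
          A n (tilde k (if k j = 1 then (j:ℕ) else ipn - 1) j)) :
    ∀ n : ℕ,
      ∑ k ∈ Finset.univ.filter (fun k : Fin n → Fin (n+1) => (∑ i, ((k i : ℕ))) = n),
        A n (fun i => ((k i : ℕ))) = Nat.doubleFactorial (2*n - 1) := by
  intro n
  have hbound : ∀ k' ∈ Comps n 0, ∀ i, k' i < n+1 := by
    intro k' hk' i
    have hs := (mem_Comps.mp hk').1
    have := Finset.single_le_sum (f := k') (fun j _ => Nat.zero_le _) (Finset.mem_univ i)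
    omega
  have hconv : ∑ k ∈ Finset.univ.filter (fun k : Fin n → Fin (n+1) => (∑ i, ((k i : ℕ))) = n),
      A n (fun i => ((k i : ℕ))) = ∑ k ∈ Comps n 0, A n k := by
    refine Finset.sum_bij' (fun k _ => fun i => ((k i : ℕ)))
      (fun k' hk' => fun i => ⟨k' i, hbound k' hk' i⟩) ?_ ?_ ?_ ?_ ?_
    · intro k hk
      exact mem_Comps.mpr ⟨(Finset.mem_filter.mp hk).2,
        fun p hp => absurd hp (by have := p.isLt; omega)⟩
    · intro k' hk'
      exact Finset.mem_filter.mpr ⟨Finset.mem_univ _, (mem_Comps.mp hk').1⟩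
    · intro k hk
      funext i
      apply Fin.ext
      rfl
    · intro k' hk'
      funext i
      rfl
    · intro k hk
      rfl
  rw [hconv, sum_comps_eq_gseq A hbase hrec n 0 (Nat.zero_le n), gseq_doubleFactorial]

end AMTaux

/-- Any family `A` of asymmetric multinomial coefficients satisfying
`A() = 1` and the recursion `A(k) = Σ_{j>i} A(k̃_j)` (where `i` is the rightmost zero index,
encoded `ipn = 0` for `c`, `ipn = p+1` for the `p`-th part) sums over all weak compositions
of `n` to `(2n-1)!!`. -/
theorem asymmetric_multinomial_total (A : (n : ℕ) → (Fin n → ℕ) → ℕ)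
    (hbase : ∀ k : Fin 0 → ℕ, A 0 k = 1)
    (hrec : ∀ (n : ℕ) (k : Fin (n+1) → ℕ), (∑ p, k p = n+1) →
      ∀ ipn : ℕ, (∀ p : Fin (n+1), k p = 0 → (p:ℕ)+1 ≤ ipn) →
        (ipn = 0 ∨ ∃ p : Fin (n+1), (p:ℕ)+1 = ipn ∧ k p = 0) →
        A (n+1) k = ∑ j ∈ Finset.univ.filter (fun j : Fin (n+1) => ipn ≤ (j:ℕ)),
          A n (tilde k (if k j = 1 then (j:ℕ) else ipn - 1) j)) :
    ∀ n : ℕ,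
      ∑ k ∈ Finset.univ.filter (fun k : Fin n → Fin (n+1) => (∑ i, ((k i : ℕ))) = n),
        A n (fun i => ((k i : ℕ))) = Nat.doubleFactorial (2*n - 1) := by
  exact AMTaux.asymmetric_multinomial_total' A hbase hrec
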